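/- arXiv:2301.01032 — 3 statements merged into one kernel-verified Lean document; each statement's English description precedes it below -/
import Mathlib

section
/- Let R be a local PID of characteristic zero and V a free R-module of finite rank acted on by an automorphism T of order p^h whose minimal polynomial has degree d with distinct roots λ_1,…,λ_d ∈ R. Then there is a basis of a rank-d free T-stable submodule V_1 ⊆ V with respect to which T acts by a lower bidiagonal matrix: diagonal entries λ_1,…,λ_d and subdiagonal entries a_1,…,a_{d−1} ∈ R. -/
open Polynomial

/-!
Over the fraction field each `λᵢ` is an eigenvalue of `T`, and clearing denominators gives
eigenvectors `wᵢ ∈ V`. Since these are independent, `x = ∑ wᵢ` satisfies `P(T) x = 0`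
exactly when `P` vanishes at every `λᵢ`. The vectors `Eᵢ = (T - λ₀) ⋯ (T - λᵢ₋₁) x` then
satisfy `T Eᵢ = λᵢ Eᵢ + Eᵢ₊₁` with `E_d = 0`, and they are independent because a nonzero
polynomial of degree `< d` cannot vanish at `d` distinct points.
-/

namespace Polynomial

variable {R : Type*} [CommRing R] [Nontrivial R]

noncomputable def prodXSubCSequence (c : ℕ → R) : Sequence R where
  elems' n := ∏ j ∈ Finset.range n, (X - C (c j))
  degree_eq' n := by
    rw [degree_eq_natDegree (monic_prod_of_monic _ _ fun j _ => monic_X_sub_C (c j)).ne_zero,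
      natDegree_finsetProd_X_sub_C_eq_card, Finset.card_range]

variable (c : ℕ → R)

theorem prodXSubCSequence_apply (n : ℕ) :
    prodXSubCSequence c n = ∏ j ∈ Finset.range n, (X - C (c j)) :=
  rfl

theorem eval_prodXSubCSequence_eq_zero {n j : ℕ} (hj : j < n) :
    (prodXSubCSequence c n).eval (c j) = 0 := by
  rw [prodXSubCSequence_apply, eval_prod]
  exact Finset.prod_eq_zero (Finset.mem_range.2 hj) (by simp)

theorem aeval_prodXSubCSequence_succ_apply {V : Type*} [AddCommGroup V] [Module R V]
    (T : Module.End R V) (x : V) (n : ℕ) :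
    aeval T (prodXSubCSequence c (n + 1)) x =
      T (aeval T (prodXSubCSequence c n) x) - c n • aeval T (prodXSubCSequence c n) x := by
  rw [prodXSubCSequence_apply, Finset.prod_range_succ, mul_comm, map_mul,
    ← prodXSubCSequence_apply]
  simp [Module.algebraMap_end_apply]

theorem Sequence.linearIndependent_aeval_apply {R V : Type*} [CommRing R] [IsDomain R]
    [AddCommGroup V] [Module R V] (S : Sequence R) (T : Module.End R V) (x : V) {d : ℕ}
    (hx : ∀ P ∈ degreeLT R d, aeval T P x = 0 → P = 0) :
    LinearIndependent R (fun i : Fin d => aeval T (S i) x) := by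
  refine (S.linearIndependent.comp _ Fin.val_injective).map
    (f := (LinearMap.applyₗ x).comp (aeval T).toLinearMap) ?_
  refine Submodule.disjoint_def.2 fun P hP hPx => hx P ?_ hPx
  refine Submodule.span_le.2 ?_ hP
  rintro _ ⟨i, rfl⟩
  simp [mem_degreeLT, S.degree_eq, i.isLt]

end Polynomial

section TorsionFree

variable {R V : Type*} [CommRing R] [IsDomain R] [AddCommGroup V] [Module R V]
  [Module.IsTorsionFree R V]

theorem TensorProduct.mk_one_injective_of_isFractionRing (K : Type*) [Field K] [Algebra R K]
    [IsFractionRing R K] : Function.Injective (TensorProduct.mk R K V 1) := by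
  refine (injective_iff_map_eq_zero _).2 fun v hv => ?_
  obtain ⟨s, hs⟩ := (IsLocalizedModule.eq_zero_iff (nonZeroDivisors R) _).1 hv
  exact (smul_eq_zero_iff_right (nonZeroDivisors.ne_zero s.2)).1 hs

namespace Module.End

theorem HasEigenvalue.of_baseChange (K : Type*) [Field K] [Algebra R K] [IsFractionRing R K]
    {T : Module.End R V} {μ : R}
    (h : Module.End.HasEigenvalue (T.baseChange K) (algebraMap R K μ)) :
    T.HasEigenvalue μ := by
  obtain ⟨w, hw⟩ := h.exists_hasEigenvector
  obtain ⟨⟨v, s⟩, hs⟩ :=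
    IsLocalizedModule.surj (nonZeroDivisors R) (TensorProduct.mk R K V 1) w
  have hsw : (1 : K) ⊗ₜ[R] v = algebraMap R K s • w := by
    simpa [Submonoid.smul_def, algebraMap_smul] using hs.symm
  have hs0 : algebraMap R K s ≠ 0 := IsFractionRing.to_map_ne_zero_of_mem_nonZeroDivisors s.2
  have hinj := TensorProduct.mk_one_injective_of_isFractionRing (R := R) (V := V) K
  refine hasEigenvalue_of_hasEigenvector (x := v) ⟨mem_eigenspace_iff.2 (hinj ?_), fun hv => ?_⟩
  · change (1 : K) ⊗ₜ[R] T v = (1 : K) ⊗ₜ[R] (μ • v)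
    rw [← LinearMap.baseChange_tmul, hsw, map_smul, hw.apply_eq_smul, TensorProduct.tmul_smul,
      hsw, smul_comm, algebraMap_smul]
  · rw [hv, TensorProduct.tmul_zero, eq_comm, smul_eq_zero] at hsw
    exact hsw.elim hs0 hw.2

theorem exists_aeval_apply_eq_zero_iff {ι : Type*} [Fintype ι] (T : Module.End R V)
    (μ : ι → R) (hμ : Function.Injective μ) (hT : ∀ i, T.HasEigenvalue (μ i)) :
    ∃ x : V, ∀ P : R[X], aeval T P x = 0 ↔ ∀ i, P.eval (μ i) = 0 := by
  choose w hw using fun i => (hT i).exists_hasEigenvector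
  refine ⟨∑ i, w i, fun P => ?_⟩
  have hPx : aeval T P (∑ i, w i) = ∑ i, P.eval (μ i) • w i := by
    simp only [map_sum, aeval_apply_of_hasEigenvector (hw _)]
  rw [hPx]
  have hw_li := eigenvectors_linearIndependent' T μ hμ w hw
  exact ⟨fun h => Fintype.linearIndependent_iff.1 hw_li _ h, fun h => by simp [h]⟩

end Module.End

end TorsionFree

theorem stmt9_general {R : Type*} [CommRing R] [IsDomain R]
    {V : Type*} [AddCommGroup V] [Module R V] [Module.Free R V] [Module.Finite R V]
    (d : ℕ)
    (T : Module.End R V)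
    (lam : Fin d → R) (hdist : Function.Injective lam)
    (hmin : minpoly (FractionRing R) (LinearMap.baseChange (FractionRing R) (T : V →ₗ[R] V)) =
      ∏ i : Fin d, (X - C (algebraMap R (FractionRing R) (lam i)))) :
    ∃ (E : Fin d → V) (a : Fin d → R),
      LinearIndependent R E ∧
      ∀ i : Fin d, T (E i) = lam i • E i +
        (if hlt : (i : ℕ) + 1 < d then a i • E ⟨(i : ℕ) + 1, hlt⟩ else 0) := by
  have hev (i : Fin d) : T.HasEigenvalue (lam i) := by
    refine .of_baseChange (FractionRing R) (Module.End.hasEigenvalue_of_isRoot ?_)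
    rw [hmin, IsRoot, eval_prod]
    exact Finset.prod_eq_zero (Finset.mem_univ i) (by simp)
  obtain ⟨x, hx⟩ := T.exists_aeval_apply_eq_zero_iff lam hdist hev
  let c : ℕ → R := fun j => if hj : j < d then lam ⟨j, hj⟩ else 0
  have hc (i : Fin d) : c i = lam i := dif_pos i.isLt
  refine ⟨fun i => aeval T (prodXSubCSequence c i) x, 1,
    (prodXSubCSequence c).linearIndependent_aeval_apply T x fun P hP hPx => ?_, fun i => ?_⟩
  · by_contra hP0
    refine hP0 (eq_zero_of_natDegree_lt_card_of_eval_eq_zero P hdist ((hx P).1 hPx) ?_)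
    simpa [natDegree_lt_iff_degree_lt hP0] using mem_degreeLT.1 hP
  · have hrec := aeval_prodXSubCSequence_succ_apply c T x i
    rw [hc, eq_sub_iff_add_eq] at hrec
    rw [← hrec, add_comm]
    congr 1
    split_ifs with hlt
    · simp
    · rw [show (i : ℕ) + 1 = d by omega]
      refine (hx _).2 fun k => ?_
      rw [← hc]
      exact eval_prodXSubCSequence_eq_zero c k.isLt

/-- Let `R` be a local PID of characteristic zero and `V` a free `R`-module of
finite rank acted on by an automorphism `T` of order `p^h` whose minimal polynomial has
degree `d` with distinct roots `λ_1,…,λ_d ∈ R` (which are `p^h`-th roots of unity). Then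
there is a basis of a rank-`d` free `T`-stable submodule `V₁ ⊆ V` with respect to which `T`
acts by a lower bidiagonal matrix: diagonal entries `λ_1,…,λ_d` and subdiagonal entries
`a_1,…,a_{d−1} ∈ R`. -/
theorem stmt9 {R : Type*} [CommRing R] [IsDomain R] [IsPrincipalIdealRing R]
    [IsLocalRing R] [CharZero R]
    {V : Type*} [AddCommGroup V] [Module R V] [Module.Free R V] [Module.Finite R V]
    (p h d : ℕ) (hp : p.Prime)
    (T : Module.End R V) (hT : T ^ (p ^ h) = 1)
    (lam : Fin d → R) (hdist : Function.Injective lam)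
    (hroot : ∀ i, lam i ^ (p ^ h) = 1)
    (hmin : minpoly (FractionRing R) (LinearMap.baseChange (FractionRing R) (T : V →ₗ[R] V)) =
      ∏ i : Fin d, (X - C (algebraMap R (FractionRing R) (lam i)))) :
    ∃ (E : Fin d → V) (a : Fin d → R),
      LinearIndependent R E ∧
      ∀ i : Fin d, T (E i) = lam i • E i +
        (if hlt : (i : ℕ) + 1 < d then a i • E ⟨(i : ℕ) + 1, hlt⟩ else 0) :=
  stmt9_general d T lam hdist hmin
end

section
/- Let T be the d×d lower bidiagonal matrix over a commutative ring with diagonal entries λ_1,…,λ_d and subdiagonal entries a_1,…,a_{d−1}. For a natural number α ≥ 1, the (i,j) entry of T^α equals λ_i^α if i = j; equals a_j a_{j+1} ··· a_{i−1} · h_{α−(i−j)}(λ_j, λ_{j+1}, …, λ_i) if j < i; and equals 0 if j > i, where h_k denotes the complete homogeneous symmetric polynomial of degree k (with h_k = 0 for k < 0, h_0 = 1). -/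
/-- The complete homogeneous symmetric function of degree `k` in the variables
`x_i`, `i ∈ s`: the sum over all multisets of size `k` with elements drawn from `s`
of the product of the corresponding values. -/
def hsymm {R : Type*} [CommRing R] (s : Finset ℕ) (k : ℕ) (x : ℕ → R) : R :=
  ∑ mlt ∈ s.sym k, ((mlt : Multiset ℕ).map x).prod


lemma hsymm_zero {R : Type*} [CommRing R] (s : Finset ℕ) (x : ℕ → R) : hsymm s 0 x = 1 := by
  simp only [hsymm, Finset.sym_zero, Finset.sum_singleton, Sym.coe_nil, Multiset.map_zero,
    Multiset.prod_zero]
  rfl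

lemma hsymm_empty {R : Type*} [CommRing R] (k : ℕ) (x : ℕ → R) :
    hsymm ∅ (k + 1) x = 0 := by
  simp [hsymm, Finset.sym_empty]

lemma hsymm_rec {R : Type*} [CommRing R] {s : Finset ℕ} {b : ℕ} (hb : b ∈ s) (k : ℕ)
    (x : ℕ → R) :
    hsymm s (k + 1) x = x b * hsymm s k x + hsymm (s.erase b) (k + 1) x := by
  classical
  rw [hsymm, ← Finset.sum_filter_add_sum_filter_not (s.sym (k+1)) (fun m => b ∈ m)]
  congr 1
  · rw [hsymm, Finset.mul_sum]
    refine Finset.sum_bij' (fun m hm => m.erase b (Finset.mem_filter.mp hm).2)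
      (fun m hm => b ::ₛ m) ?_ ?_ ?_ ?_ ?_
    · intro m hm
      rw [Finset.mem_sym_iff]
      intro c hc
      have := (Finset.mem_sym_iff.mp (Finset.mem_filter.mp hm).1) c
      apply this
      have : (c : ℕ) ∈ (m.erase b (Finset.mem_filter.mp hm).2 : Multiset ℕ) := hc
      rw [Sym.coe_erase] at this
      exact Multiset.mem_of_mem_erase this
    · intro m hm
      rw [Finset.mem_filter]
      constructor
      · rw [Finset.mem_sym_iff]
        intro c hc
        rcases Sym.mem_cons.mp hc with h | h
        · exact h ▸ hb
        · exact Finset.mem_sym_iff.mp hm c h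
      · exact Sym.mem_cons_self b m
    · intro m hm; exact Sym.cons_erase _
    · intro m hm; exact Sym.erase_cons_head _ _
    · intro m hm
      have h2 := (Finset.mem_filter.mp hm).2
      have hco : (m : Multiset ℕ) = b ::ₘ ((m : Multiset ℕ).erase b) :=
        (Multiset.cons_erase h2).symm
      rw [show ((m.erase b h2 : Sym ℕ k) : Multiset ℕ) = (m : Multiset ℕ).erase b from
        Sym.coe_erase h2]
      rw [hco, Multiset.map_cons, Multiset.prod_cons]
      rw [Multiset.erase_cons_head]
  · rw [hsymm]
    apply Finset.sum_congr
    · ext m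
      simp only [Finset.mem_filter, Finset.mem_sym_iff, Finset.mem_erase]
      constructor
      · rintro ⟨h1, h2⟩ c hc
        exact ⟨fun hcb => h2 (hcb ▸ hc), h1 c hc⟩
      · intro h
        exact ⟨fun c hc => (h c hc).2, fun hbm => (h b hbm).1 rfl⟩
    · intros; rfl

lemma hsymm_singleton {R : Type*} [CommRing R] (b k : ℕ) (x : ℕ → R) :
    hsymm {b} k x = x b ^ k := by
  induction k with
  | zero => simp [hsymm_zero]
  | succ n ih =>
    rw [hsymm_rec (Finset.mem_singleton_self b) n x, ih, Finset.erase_singleton,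
      hsymm_empty]
    ring

/-- Let `T` be the `d×d` lower bidiagonal matrix over a commutative ring with
diagonal entries `λ_1,…,λ_d` and subdiagonal entries `a_1,…,a_{d−1}`. For `α ≥ 1`, the
`(i,j)` entry of `T^α` equals `λ_i^α` if `i = j`; equals
`a_j⋯a_{i−1} · h_{α−(i−j)}(λ_j,…,λ_i)` if `j < i` (zero when `i − j > α`, following the
convention `h_k = 0` for `k < 0`); and equals `0` if `j > i`. -/
theorem stmt10 {R : Type*} [CommRing R] (d α : ℕ) (hα : 1 ≤ α)
    (lam a : ℕ → R) (T : Matrix (Fin d) (Fin d) R)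
    (hT : ∀ i j : Fin d, T i j =
      if i = j then lam (i : ℕ) else if (i : ℕ) = (j : ℕ) + 1 then a (j : ℕ) else 0) :
    ∀ i j : Fin d, (T ^ α) i j =
      if i = j then lam (i : ℕ) ^ α
      else if (j : ℕ) < (i : ℕ) then
        (if (i : ℕ) - (j : ℕ) ≤ α then
          (∏ x ∈ Finset.Ico (j : ℕ) (i : ℕ), a x) *
            hsymm (Finset.Icc (j : ℕ) (i : ℕ)) (α - ((i : ℕ) - (j : ℕ))) lam
         else 0)
      else 0 := by
  induction α, hα using Nat.le_induction with
  | base =>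
    intro i j
    rw [pow_one, hT i j]
    rcases eq_or_ne i j with h | h
    · simp [h]
    · have hne : (i : ℕ) ≠ (j : ℕ) := fun hh => h (Fin.ext hh)
      rw [if_neg h, if_neg h]
      by_cases hlt : (j : ℕ) < (i : ℕ)
      · rw [if_pos hlt]
        by_cases hone : (i : ℕ) = (j : ℕ) + 1
        · rw [if_pos hone, if_pos (by omega), hone,
            show ((j : ℕ) + 1 - (j : ℕ)) = 1 from by omega,
            show (1 - 1 : ℕ) = 0 from rfl, hsymm_zero, Nat.Ico_succ_singleton,
            Finset.prod_singleton, mul_one]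
        · rw [if_neg hone, if_neg (by omega)]
      · rw [if_neg hlt, if_neg (by omega)]
  | succ n hn ih =>
    intro i j
    have key : (T ^ (n + 1)) i j = (T ^ n) i j * lam (j : ℕ) +
        ∑ k : Fin d, (T ^ n) i k * (if (k : ℕ) = (j : ℕ) + 1 then a (j : ℕ) else 0) := by
      rw [pow_succ, Matrix.mul_apply]
      have hterm : ∀ k : Fin d, (T ^ n) i k * T k j =
          (if k = j then (T ^ n) i k * lam (j : ℕ) else 0) +
          (T ^ n) i k * (if (k : ℕ) = (j : ℕ) + 1 then a (j : ℕ) else 0) := by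
        intro k
        rw [hT k j]
        by_cases h1 : k = j
        · have h2 : ¬ ((k : ℕ) = (j : ℕ) + 1) := by
            subst h1; omega
          rw [if_pos h1, if_pos h1, if_neg h2, h1, mul_zero, add_zero]
        · rw [if_neg h1, if_neg h1, zero_add]
      rw [Finset.sum_congr rfl (fun k _ => hterm k), Finset.sum_add_distrib,
        Finset.sum_ite_eq' Finset.univ j, if_pos (Finset.mem_univ j)]
    rcases Nat.lt_trichotomy (j : ℕ) (i : ℕ) with hlt | heq | hgt
    · -- j < i
      have hJd : (j : ℕ) + 1 < d := lt_of_le_of_lt hlt i.isLt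
      set J : Fin d := ⟨(j : ℕ) + 1, hJd⟩ with hJ
      have hsum : ∑ k : Fin d, (T ^ n) i k * (if (k : ℕ) = (j : ℕ) + 1 then a (j : ℕ) else 0)
          = (T ^ n) i J * a (j : ℕ) := by
        have : ∀ k : Fin d, ((k : ℕ) = (j : ℕ) + 1) = (k = J) := by
          intro k; simp [Fin.ext_iff, hJ]
        simp only [this]
        simp only [mul_ite, mul_zero]
        rw [Finset.sum_ite_eq' Finset.univ J, if_pos (Finset.mem_univ J)]
      rw [key, hsum, ih i j, ih i J]
      have hij : i ≠ j := fun hh => by rw [hh] at hlt; omega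
      have hJv : (J : ℕ) = (j : ℕ) + 1 := rfl
      rw [if_neg hij, if_pos hlt]
      rw [if_neg (show ¬ i = j from hij), if_pos hlt]
      by_cases hone : (i : ℕ) = (j : ℕ) + 1
      · -- i = j + 1
        have hiJ : i = J := Fin.ext (by rw [hJv, hone])
        rw [if_pos hiJ]
        obtain ⟨m, rfl⟩ : ∃ m, n = m + 1 := ⟨n - 1, by omega⟩
        rw [if_pos (by omega), if_pos (by omega), hone,
          show ((j : ℕ) + 1 - (j : ℕ)) = 1 from by omega,
          show (m + 1 + 1 - 1) = m + 1 from by omega,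
          show (m + 1 - 1) = m from by omega,
          Nat.Ico_succ_singleton, Finset.prod_singleton]
        rw [hsymm_rec (show (j : ℕ) ∈ Finset.Icc (j : ℕ) ((j : ℕ) + 1) from by
            simp) m lam,
          Finset.Icc_erase_left, Nat.Ioc_succ_singleton, hsymm_singleton]
        ring
      · -- j + 1 < i
        have hJi : ¬ i = J := fun hh => hone (by rw [hh, hJv])
        have hJlt : (J : ℕ) < (i : ℕ) := by rw [hJv]; omega
        rw [if_neg hJi, if_pos hJlt, hJv]
        have hsplit : (∏ x ∈ Finset.Ico (j : ℕ) (i : ℕ), a x) =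
            a (j : ℕ) * ∏ x ∈ Finset.Ico ((j : ℕ) + 1) (i : ℕ), a x :=
          Finset.prod_eq_prod_Ico_succ_bot hlt a
        rcases Nat.lt_trichotomy ((i : ℕ) - (j : ℕ)) (n + 1) with hc | hc | hc
        · -- i - j ≤ n
          have c1 : (i : ℕ) - (j : ℕ) ≤ n := by omega
          have c2 : (i : ℕ) - ((j : ℕ) + 1) ≤ n := by omega
          have c3 : (i : ℕ) - (j : ℕ) ≤ n + 1 := by omega
          rw [if_pos c1, if_pos c2, if_pos c3]
          set K := n - ((i : ℕ) - (j : ℕ)) with hK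
          rw [show (n + 1 - ((i : ℕ) - (j : ℕ))) = K + 1 from by omega,
            show (n - ((i : ℕ) - ((j : ℕ) + 1))) = K + 1 from by omega]
          rw [hsymm_rec (show (j : ℕ) ∈ Finset.Icc (j : ℕ) (i : ℕ) from by
              simp [Nat.le_of_lt hlt]) K lam,
            Finset.Icc_erase_left, ← Finset.Icc_add_one_left_eq_Ioc, hsplit]
          ring
        · -- i - j = n + 1
          have c1 : ¬ ((i : ℕ) - (j : ℕ) ≤ n) := by omega
          have c2 : (i : ℕ) - ((j : ℕ) + 1) ≤ n := by omega
          have c3 : (i : ℕ) - (j : ℕ) ≤ n + 1 := by omega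
          rw [if_neg c1, if_pos c2, if_pos c3]
          rw [show (n + 1 - ((i : ℕ) - (j : ℕ))) = 0 from by omega,
            show (n - ((i : ℕ) - ((j : ℕ) + 1))) = 0 from by omega,
            hsymm_zero, hsymm_zero, hsplit]
          ring
        · -- i - j > n + 1
          have c1 : ¬ ((i : ℕ) - (j : ℕ) ≤ n) := by omega
          have c2 : ¬ ((i : ℕ) - ((j : ℕ) + 1) ≤ n) := by omega
          have c3 : ¬ ((i : ℕ) - (j : ℕ) ≤ n + 1) := by omega
          rw [if_neg c1, if_neg c2, if_neg c3]
          ring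
    · -- i = j
      have hij : i = j := Fin.ext heq.symm
      have hsum : ∑ k : Fin d, (T ^ n) i k * (if (k : ℕ) = (j : ℕ) + 1 then a (j : ℕ) else 0)
          = 0 := by
        apply Finset.sum_eq_zero
        intro k _
        by_cases hk : (k : ℕ) = (j : ℕ) + 1
        · have h1 : ¬ i = k := fun hh => by rw [hh] at heq; omega
          have h2 : ¬ (k : ℕ) < (i : ℕ) := by omega
          rw [ih i k, if_neg h1, if_neg h2, zero_mul]
        · rw [if_neg hk, mul_zero]
      rw [key, hsum, add_zero, ih i j, if_pos hij, if_pos hij, hij, pow_succ]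
    · -- i < j
      have hij : ¬ i = j := fun hh => by rw [hh] at hgt; omega
      have hsum : ∑ k : Fin d, (T ^ n) i k * (if (k : ℕ) = (j : ℕ) + 1 then a (j : ℕ) else 0)
          = 0 := by
        apply Finset.sum_eq_zero
        intro k _
        by_cases hk : (k : ℕ) = (j : ℕ) + 1
        · have h1 : ¬ i = k := fun hh => by rw [hh, hk] at hgt; omega
          have h2 : ¬ (k : ℕ) < (i : ℕ) := by omega
          rw [ih i k, if_neg h1, if_neg h2, zero_mul]
        · rw [if_neg hk, mul_zero]
      rw [key, hsum, add_zero, ih i j, if_neg hij, if_neg (by omega), zero_mul,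
        if_neg hij, if_neg (by omega)]
end

section
/- The modules V_α(λ_1,κ) and V_α(λ_2,κ) over k[C_q ⋊ C_m] are isomorphic if and only if λ_1 ≡ λ_2 (mod m). -/
/-!
In characteristic `p` we have `(τ − 1)^q = τ^q − 1 = 0`, so `N = τ − 1` is nilpotent and the basis
`e, N e, …, N^(κ−1) e` forces `N^κ e = 0`. Hence the basis-matching map between two such modules
intertwines `N`, hence `τ`, and it intertwines `σ` as soon as `σ e` is the same multiple of `e`
on both sides, i.e. `ζ^λ₁ = ζ^λ₂`. Conversely `σ` preserves `N V` and acts on the line `V / N V`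
by `ζ^λ`, so `ζ^λ` is an isomorphism invariant.
-/

/-- The data exhibiting a `k`-vector space `V` as the indecomposable
`k[C_q ⋊ C_m]`-module `V_α(λ,κ)`: endomorphisms `t = τ`, `s = σ` satisfying the group
relations, and a basis `(τ−1)^ν e`, `0 ≤ ν ≤ κ−1`, where `e` is a `σ`-eigenvector with
eigenvalue `ζ^λ`. -/
structure VModuleData (k : Type*) [Field k] (q m α κ : ℕ) (ζ : k) (lam : ℕ)
    (V : Type*) [AddCommGroup V] [Module k V] where
  t : Module.End k V
  s : Module.End k V
  e : V
  b : Module.Basis (Fin κ) k V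
  ht : t ^ q = 1
  hs : s ^ m = 1
  hrel : s * t = t ^ α * s
  hb : ∀ i : Fin κ, b i = ((t - 1) ^ (i : ℕ)) e
  he : s e = (ζ ^ lam) • e

section

open Polynomial Module

lemma sub_one_pow_char_pow (R : Type*) [CommRing R] {A : Type*} [Ring A] [Algebra R A]
    (p h : ℕ) [Fact p.Prime] [CharP R p] (a : A) :
    (a - 1) ^ (p ^ h) = a ^ (p ^ h) - 1 := by
  simpa using congrArg (aeval a) (sub_pow_char_pow (X : R[X]) 1 (p := p) (n := h))

variable {k : Type*} [Field k]

lemma IsNilpotent.pow_finrank_eq_zero {V : Type*} [AddCommGroup V] [Module k V]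
    [FiniteDimensional k V] {N : Module.End k V} (hN : IsNilpotent N) :
    N ^ finrank k V = 0 := by
  simpa only [hN.charpoly_eq_X_pow_finrank, map_pow, aeval_X] using N.aeval_self_charpoly

lemma LinearEquiv.conjAlgEquiv_eq_iff {V₁ V₂ : Type*} [AddCommGroup V₁] [Module k V₁]
    [AddCommGroup V₂] [Module k V₂] (φ : V₁ ≃ₗ[k] V₂) (f₁ : Module.End k V₁)
    (f₂ : Module.End k V₂) :
    φ.conjAlgEquiv k f₁ = f₂ ↔ ∀ v, φ (f₁ v) = f₂ (φ v) := by
  rw [LinearEquiv.conjAlgEquiv_apply]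
  constructor
  · rintro rfl v
    simp
  · intro h
    ext w
    simpa using h (φ.symm w)

lemma LinearEquiv.mem_range_of_apply_mem_range_conjAlgEquiv {V₁ V₂ : Type*} [AddCommGroup V₁]
    [Module k V₁] [AddCommGroup V₂] [Module k V₂] (φ : V₁ ≃ₗ[k] V₂) {f : Module.End k V₁}
    {v : V₁} (hv : φ v ∈ LinearMap.range (φ.conjAlgEquiv k f)) : v ∈ LinearMap.range f := by
  obtain ⟨w, hw⟩ := hv
  refine ⟨φ.symm w, φ.injective ?_⟩
  simpa [LinearEquiv.conjAlgEquiv_apply] using hw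

lemma Module.Basis.conjAlgEquiv_eq {ι V₁ V₂ : Type*} [AddCommGroup V₁] [Module k V₁]
    [AddCommGroup V₂] [Module k V₂] (b : Basis ι k V₁) (φ : V₁ ≃ₗ[k] V₂)
    {f₁ : Module.End k V₁} {f₂ : Module.End k V₂} (h : ∀ i, φ (f₁ (b i)) = f₂ (φ (b i))) :
    φ.conjAlgEquiv k f₁ = f₂ := by
  rw [φ.conjAlgEquiv_eq_iff]
  exact LinearMap.congr_fun (b.ext (f₁ := φ.toLinearMap ∘ₗ f₁) (f₂ := f₂ ∘ₗ φ.toLinearMap) h)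

namespace VModuleData

variable {q m α κ : ℕ} {ζ : k} {lam : ℕ} {V : Type*} [AddCommGroup V] [Module k V]

lemma isNilpotent_t_sub_one {p h : ℕ} [Fact p.Prime] [CharP k p]
    (D : VModuleData k (p ^ h) m α κ ζ lam V) : IsNilpotent (D.t - 1) :=
  ⟨p ^ h, by rw [sub_one_pow_char_pow k, D.ht, sub_self]⟩

variable (D : VModuleData k q m α κ ζ lam V)

lemma t_sub_one_pow_eq_zero (hN : IsNilpotent (D.t - 1)) : (D.t - 1) ^ κ = 0 := by
  have := Module.Finite.of_basis D.b
  simpa [finrank_eq_card_basis D.b] using hN.pow_finrank_eq_zero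

lemma t_sub_one_pow_apply_e (hN : IsNilpotent (D.t - 1)) (n : ℕ) :
    ((D.t - 1) ^ n) D.e = if h : n < κ then D.b ⟨n, h⟩ else 0 := by
  split_ifs with h
  · exact (D.hb ⟨n, h⟩).symm
  · rw [← Nat.sub_add_cancel (not_lt.mp h), pow_add, Module.End.mul_apply,
      D.t_sub_one_pow_eq_zero hN, LinearMap.zero_apply, map_zero]

lemma b_succ_mem_range {i : ℕ} (hi : i + 1 < κ) : D.b ⟨i + 1, hi⟩ ∈ LinearMap.range (D.t - 1) := by
  rw [D.hb, pow_succ']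
  exact LinearMap.mem_range_self _ _

lemma e_notMem_range (hκ : 0 < κ) (hN : IsNilpotent (D.t - 1)) :
    D.e ∉ LinearMap.range (D.t - 1) := by
  intro he
  have htop : LinearMap.range (D.t - 1) = ⊤ := by
    rw [eq_top_iff, ← D.b.span_eq, Submodule.span_le]
    rintro _ ⟨⟨_ | i, hi⟩, rfl⟩
    · simpa [D.hb] using he
    · exact D.b_succ_mem_range hi
  have hsurj : Function.Surjective ⇑((D.t - 1) ^ κ) := by
    rw [Module.End.coe_pow]
    exact (LinearMap.range_eq_top.mp htop).iterate κ
  obtain ⟨v, hv⟩ := hsurj (D.b ⟨0, hκ⟩)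
  rw [D.t_sub_one_pow_eq_zero hN, LinearMap.zero_apply] at hv
  exact D.b.ne_zero _ hv.symm

lemma semiconjBy_s : SemiconjBy D.s (D.t - 1) (D.t ^ α - 1) :=
  SemiconjBy.sub_right D.hrel (SemiconjBy.one_right _)

lemma s_t_sub_one_pow_apply_e (i : ℕ) :
    D.s (((D.t - 1) ^ i) D.e) = ζ ^ lam • ((D.t ^ α - 1) ^ i) D.e := by
  rw [← Module.End.mul_apply, (D.semiconjBy_s.pow_right i).eq, Module.End.mul_apply, D.he,
    map_smul]

lemma s_mem_range {u : V} (hu : u ∈ LinearMap.range (D.t - 1)) :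
    D.s u ∈ LinearMap.range (D.t - 1) := by
  obtain ⟨w, rfl⟩ := hu
  -- `τ^α − 1 = (τ − 1)(1 + τ + ⋯ + τ^(α−1))`
  refine ⟨(∑ i ∈ Finset.range α, D.t ^ i) (D.s w), ?_⟩
  rw [← Module.End.mul_apply, ← Module.End.mul_apply, mul_geom_sum, ← D.semiconjBy_s.eq]
  rfl

lemma s_sub_smul_mem_range (u : V) : D.s u - ζ ^ lam • u ∈ LinearMap.range (D.t - 1) := by
  have hle : ⊤ ≤ (LinearMap.range (D.t - 1)).comap (D.s - ζ ^ lam • 1) := by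
    rw [← D.b.span_eq, Submodule.span_le]
    rintro _ ⟨⟨_ | i, hi⟩, rfl⟩
    · simp [D.hb, D.he]
    · have hb := D.b_succ_mem_range hi
      exact sub_mem (D.s_mem_range hb) (Submodule.smul_mem _ _ hb)
  simpa using hle (Submodule.mem_top (x := u))

lemma eq_of_forall_sub_smul_mem_range (hκ : 0 < κ) (hN : IsNilpotent (D.t - 1)) {c : k}
    (hc : ∀ u, D.s u - c • u ∈ LinearMap.range (D.t - 1)) : ζ ^ lam = c := by
  by_contra hne
  have hmem := hc D.e
  rw [D.he, ← sub_smul] at hmem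
  exact D.e_notMem_range hκ hN <| by
    simpa [sub_ne_zero.mpr hne] using Submodule.smul_mem _ (ζ ^ lam - c)⁻¹ hmem

end VModuleData

section

variable {q m α κ : ℕ} {ζ : k} {lam₁ lam₂ : ℕ} {V₁ V₂ : Type*} [AddCommGroup V₁] [Module k V₁]
  [AddCommGroup V₂] [Module k V₂]
  (D₁ : VModuleData k q m α κ ζ lam₁ V₁) (D₂ : VModuleData k q m α κ ζ lam₂ V₂)

lemma VModuleData.pow_eq_pow_of_conjAlgEquiv (hκ : 0 < κ) (hN : IsNilpotent (D₁.t - 1))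
    (φ : V₁ ≃ₗ[k] V₂) (ht : φ.conjAlgEquiv k D₁.t = D₂.t) (hs : φ.conjAlgEquiv k D₁.s = D₂.s) :
    ζ ^ lam₁ = ζ ^ lam₂ := by
  refine D₁.eq_of_forall_sub_smul_mem_range hκ hN fun u => ?_
  apply φ.mem_range_of_apply_mem_range_conjAlgEquiv
  rw [map_sub (φ.conjAlgEquiv k), map_one, ht, map_sub, map_smul,
    (φ.conjAlgEquiv_eq_iff _ _).mp hs]
  exact D₂.s_sub_smul_mem_range (φ u)

lemma VModuleData.exists_conjAlgEquiv (hN₁ : IsNilpotent (D₁.t - 1))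
    (hN₂ : IsNilpotent (D₂.t - 1)) (hζ : ζ ^ lam₁ = ζ ^ lam₂) :
    ∃ φ : V₁ ≃ₗ[k] V₂, φ.conjAlgEquiv k D₁.t = D₂.t ∧ φ.conjAlgEquiv k D₁.s = D₂.s := by
  set φ := D₁.b.equiv D₂.b (Equiv.refl _)
  have hφ (n : ℕ) : φ (((D₁.t - 1) ^ n) D₁.e) = ((D₂.t - 1) ^ n) D₂.e := by
    rw [D₁.t_sub_one_pow_apply_e hN₁, D₂.t_sub_one_pow_apply_e hN₂]
    split_ifs <;> simp [φ]
  have ht : φ.conjAlgEquiv k D₁.t = D₂.t := by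
    suffices φ.conjAlgEquiv k (D₁.t - 1) = D₂.t - 1 by simpa using this
    refine D₁.b.conjAlgEquiv_eq φ fun i => ?_
    rw [D₁.hb, ← Module.End.mul_apply, ← pow_succ', hφ, hφ, ← Module.End.mul_apply, ← pow_succ']
  have he : φ D₁.e = D₂.e := by simpa using hφ 0
  refine ⟨φ, ht, D₁.b.conjAlgEquiv_eq φ fun i => ?_⟩
  have htα : φ.conjAlgEquiv k ((D₁.t ^ α - 1) ^ (i : ℕ)) = (D₂.t ^ α - 1) ^ (i : ℕ) := by
    simp [ht]
  rw [D₁.hb, hφ, D₁.s_t_sub_one_pow_apply_e, D₂.s_t_sub_one_pow_apply_e, map_smul, hζ,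
    (φ.conjAlgEquiv_eq_iff _ _).mp htα, he]

end

end

theorem stmt18_general {k : Type*} [Field k]
    (p h m α κ : ℕ) (hp : p.Prime) [CharP k p]
    (hm : 0 < m) (ζ : k) (hζ : IsPrimitiveRoot ζ m)
    (hκ1 : 1 ≤ κ)
    (lam₁ lam₂ : ℕ)
    {V₁ : Type*} [AddCommGroup V₁] [Module k V₁]
    {V₂ : Type*} [AddCommGroup V₂] [Module k V₂]
    (D₁ : VModuleData k (p ^ h) m α κ ζ lam₁ V₁)
    (D₂ : VModuleData k (p ^ h) m α κ ζ lam₂ V₂) :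
    (∃ φ : V₁ ≃ₗ[k] V₂,
        (∀ v : V₁, φ (D₁.t v) = D₂.t (φ v)) ∧ (∀ v : V₁, φ (D₁.s v) = D₂.s (φ v))) ↔
      (lam₁ : ZMod m) = (lam₂ : ZMod m) := by
  have : Fact p.Prime := ⟨hp⟩
  have hζpow : ζ ^ lam₁ = ζ ^ lam₂ ↔ (lam₁ : ZMod m) = lam₂ := by
    rw [ZMod.natCast_eq_natCast_iff, hζ.eq_orderOf]
    exact (hζ.isOfFinOrder hm.ne').pow_eq_pow_iff_modEq
  simp only [← LinearEquiv.conjAlgEquiv_eq_iff, ← hζpow]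
  constructor
  · rintro ⟨φ, ht, hs⟩
    exact D₁.pow_eq_pow_of_conjAlgEquiv D₂ hκ1 D₁.isNilpotent_t_sub_one φ ht hs
  · exact D₁.exists_conjAlgEquiv D₂ D₁.isNilpotent_t_sub_one D₂.isNilpotent_t_sub_one

/-- The modules `V_α(λ₁,κ)` and `V_α(λ₂,κ)` over `k[C_q ⋊ C_m]` are
isomorphic if and only if `λ₁ ≡ λ₂ (mod m)`. -/
theorem stmt18 {k : Type*} [Field k] [IsAlgClosed k]
    (p h m α κ : ℕ) (hp : p.Prime) [CharP k p]
    (hm : 0 < m) (hmp : Nat.Coprime m p) (ζ : k) (hζ : IsPrimitiveRoot ζ m)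
    (hα1 : 1 ≤ α) (hαp : Nat.Coprime α p) (hαm : α ^ m ≡ 1 [MOD p ^ h])
    (hκ1 : 1 ≤ κ) (hκ : κ ≤ p ^ h)
    (lam₁ lam₂ : ℕ)
    {V₁ : Type*} [AddCommGroup V₁] [Module k V₁]
    {V₂ : Type*} [AddCommGroup V₂] [Module k V₂]
    (D₁ : VModuleData k (p ^ h) m α κ ζ lam₁ V₁)
    (D₂ : VModuleData k (p ^ h) m α κ ζ lam₂ V₂) :
    (∃ φ : V₁ ≃ₗ[k] V₂,
        (∀ v : V₁, φ (D₁.t v) = D₂.t (φ v)) ∧ (∀ v : V₁, φ (D₁.s v) = D₂.s (φ v))) ↔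
      (lam₁ : ZMod m) = (lam₂ : ZMod m) :=
  stmt18_general p h m α κ hp hm ζ hζ hκ1 lam₁ lam₂ D₁ D₂
end
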